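/- Let n ≥ 1 and let ξ₁,…,ξₙ be i.i.d. uniform random variables on [0,1] with order statistics ξ₍₁₎ ≤ … ≤ ξ₍ₙ₎. For every δ ∈ (0,1] with log(4n/δ) ≤ n/4, with probability at least 1 − δ/2 one has max_{1≤i≤n} |ξ₍ᵢ₎ − i/n| ≤ 2·√(log(4n/δ)/n). -/

import Mathlib

/-!
`ξ₍ᵢ₎ ≤ t` holds exactly when at least `i` sample points lie in `(-∞, t]`, and that count is a
sum of `n` independent Bernoulli variables of mean `t` (for `t ∈ [0,1]`). Hence `ξ₍ᵢ₎` can only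
leave `[i/n - ε, i/n + ε]` if the count at `t = i/n ± ε` deviates from `nt` by at least `nε`,
which Hoeffding's inequality bounds by `exp (-2nε²)`; thresholds outside `[0,1]` are never
crossed since the sample lies in `[0,1]` almost surely. A union bound over the `2n` events gives
`2n exp (-2nε²)`, which is at most `δ/2` for `ε = 2√(log (4n/δ)/n)`.
-/

open MeasureTheory

/-- The uniform probability measure on `[0,1]`. -/
noncomputable def unif01 : Measure ℝ := volume.restrict (Set.Icc (0:ℝ) 1)

/-- Law of `n` i.i.d. uniform random variables on `[0,1]`. -/
noncomputable def Pxi (n : ℕ) : Measure (Fin n → ℝ) := Measure.pi fun _ => unif01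

/-- The canonical probability space of the graphon sampling model: the first coordinate
carries the `n` i.i.d. uniform sample points, the second coordinate carries an independent
array of i.i.d. uniform variables used to generate the Bernoulli edge indicators. -/
noncomputable def Pg (n : ℕ) : Measure ((Fin n → ℝ) × (Fin n → Fin n → ℝ)) :=
  (Pxi n).prod (Measure.pi fun _ : Fin n => Measure.pi fun _ : Fin n => unif01)

/-- The order statistics of `ξ`: `sortedVec ξ i` is the `(i+1)`-st smallest value of `ξ`. -/
noncomputable def sortedVec {n : ℕ} (ξ : Fin n → ℝ) : Fin n → ℝ := ξ ∘ ⇑(Tuple.sort ξ)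

/-- The weight matrix `Q` with `Q i j = ρ · W(ξ₍ᵢ₎, ξ₍ⱼ₎)` (order statistics of `ξ`). -/
noncomputable def Qmat (n : ℕ) (W : ℝ → ℝ → ℝ) (ρ : ℝ) (ξ : Fin n → ℝ) :
    Matrix (Fin n) (Fin n) ℝ :=
  Matrix.of fun i j => ρ * W (sortedVec ξ i) (sortedVec ξ j)

/-- The adjacency matrix sampled from the graphon model: given the uniforms `ω.2`,
`A i j = 1` iff `ω.2 i j ≤ Q i j` (for `i < j`, symmetrized, zero diagonal), so that
conditionally on `ξ = ω.1` the entries `A i j`, `i < j`, are independent `Bernoulli (Q i j)`. -/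
noncomputable def Amat (n : ℕ) (W : ℝ → ℝ → ℝ) (ρ : ℝ)
    (ω : (Fin n → ℝ) × (Fin n → Fin n → ℝ)) : Matrix (Fin n) (Fin n) ℝ :=
  Matrix.of fun i j =>
    if i = j then 0
    else if i < j then (if ω.2 i j ≤ Qmat n W ρ ω.1 i j then 1 else 0)
    else (if ω.2 j i ≤ Qmat n W ρ ω.1 j i then 1 else 0)

/-- The number of singular values of `M` (square roots of eigenvalues of `Mᵀ M`,
counted with multiplicity) that are `≥ t`. -/
noncomputable def svCount {n : ℕ} (M : Matrix (Fin n) (Fin n) ℝ) (t : ℝ) : ℕ :=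
  (Finset.univ.filter fun i : Fin n =>
    t ≤ Real.sqrt (((by have h := Matrix.isHermitian_conjTranspose_mul_self M; rwa [Matrix.conjTranspose_eq_transpose_of_trivial] at h) : (M.transpose * M).IsHermitian).eigenvalues i)).card


open ProbabilityTheory Real Finset

lemma measureReal_pi_sum_ge_le {ι Ω : Type*} [Fintype ι] [MeasurableSpace Ω] {μ : Measure Ω}
    [IsProbabilityMeasure μ] {g : Ω → ℝ} {c : NNReal} (hg : HasSubgaussianMGF g c μ)
    {ε : ℝ} (hε : 0 ≤ ε) :
    (Measure.pi fun _ : ι => μ).real {ξ | ε ≤ ∑ j, g (ξ j)} ≤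
      exp (-ε ^ 2 / (2 * (Fintype.card ι * c))) := by
  have hindep : iIndepFun (fun j (ξ : ι → Ω) => g (ξ j)) (Measure.pi fun _ => μ) :=
    iIndepFun_pi fun _ => hg.aemeasurable
  have hcoord (j : ι) : HasSubgaussianMGF (fun ξ : ι → Ω => g (ξ j)) c (Measure.pi fun _ => μ) :=
    HasSubgaussianMGF.of_map (measurable_pi_apply j).aemeasurable
      (by rwa [(measurePreserving_eval (fun _ => μ) j).map_eq])
  have h := HasSubgaussianMGF.measure_sum_ge_le_of_iIndepFun hindep (s := univ)
    (fun j _ => hcoord j) hε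
  rwa [sum_const, card_univ, nsmul_eq_mul, NNReal.coe_mul, NNReal.coe_natCast] at h

lemma hasSubgaussianMGF_indicator_Iic_sub (μ : Measure ℝ) [IsProbabilityMeasure μ] (t : ℝ) :
    HasSubgaussianMGF (fun x => (Set.Iic t).indicator 1 x - μ.real (Set.Iic t)) (1 / 4) μ := by
  have h := hasSubgaussianMGF_of_mem_Icc (μ := μ) (X := (Set.Iic t).indicator 1) (a := 0) (b := 1)
    ((measurable_one.indicator measurableSet_Iic).aemeasurable)
    (ae_of_all _ fun x => by by_cases hx : x ≤ t <;> simp [Set.indicator, hx])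
  rw [integral_indicator_one measurableSet_Iic] at h
  convert h using 1
  ext; norm_num

section EmpiricalCount

variable {ι : Type*} [Fintype ι] (μ : Measure ℝ) [IsProbabilityMeasure μ]

lemma sum_indicator_Iic_sub_eq (ξ : ι → ℝ) (t p : ℝ) :
    ∑ j, ((Set.Iic t).indicator 1 (ξ j) - p) = #{j | ξ j ≤ t} - Fintype.card ι * p := by
  simp [Finset.sum_sub_distrib, Set.indicator_apply, Finset.sum_boole]

lemma measureReal_pi_mean_add_le_card_le (t : ℝ) {ε : ℝ} (hε : 0 ≤ ε) :
    (Measure.pi fun _ : ι => μ).real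
        {ξ | Fintype.card ι * μ.real (Set.Iic t) + ε ≤ #{j | ξ j ≤ t}} ≤
      exp (-2 * ε ^ 2 / Fintype.card ι) := by
  have h := measureReal_pi_sum_ge_le (ι := ι) (hasSubgaussianMGF_indicator_Iic_sub μ t) hε
  simp only [sum_indicator_Iic_sub_eq] at h
  refine (measureReal_mono fun ξ hξ => ?_).trans (h.trans_eq ?_)
  · simp only [Set.mem_ofPred_eq] at hξ ⊢
    linarith
  · push_cast
    congr 1
    ring

lemma measureReal_pi_card_add_le_mean_le (t : ℝ) {ε : ℝ} (hε : 0 ≤ ε) :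
    (Measure.pi fun _ : ι => μ).real
        {ξ | (#{j | ξ j ≤ t} : ℝ) + ε ≤ Fintype.card ι * μ.real (Set.Iic t)} ≤
      exp (-2 * ε ^ 2 / Fintype.card ι) := by
  have h := measureReal_pi_sum_ge_le (ι := ι) (hasSubgaussianMGF_indicator_Iic_sub μ t).neg hε
  simp only [Pi.neg_apply, Finset.sum_neg_distrib, sum_indicator_Iic_sub_eq] at h
  refine (measureReal_mono fun ξ hξ => ?_).trans (h.trans_eq ?_)
  · simp only [Set.mem_ofPred_eq] at hξ ⊢
    linarith
  · push_cast
    congr 1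
    ring

end EmpiricalCount

lemma sortedVec_le_iff {n : ℕ} (ξ : Fin n → ℝ) (i : Fin n) (a : ℝ) :
    sortedVec ξ i ≤ a ↔ (i : ℕ) < #{j | ξ j ≤ a} := by
  rw [sortedVec, ← Tuple.lt_card_le_iff_apply_le_of_monotone (Tuple.monotone_sort ξ),
    card_filter, card_filter, Function.comp_def, Equiv.sum_comp (Tuple.sort ξ)
      (fun j => if ξ j ≤ a then 1 else 0)]

instance : IsProbabilityMeasure unif01 := ⟨by simp [unif01, Real.volume_Icc]⟩

instance (n : ℕ) : IsProbabilityMeasure (Pxi n) := by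
  unfold Pxi
  infer_instance

lemma unif01_real_Iic {t : ℝ} (h0 : 0 ≤ t) (h1 : t ≤ 1) : unif01.real (Set.Iic t) = t := by
  rw [unif01, measureReal_restrict_apply measurableSet_Iic,
    show Set.Iic t ∩ Set.Icc 0 1 = Set.Icc 0 t by grind]
  simp [h0]

lemma ae_sortedVec_mem_Icc (n : ℕ) : ∀ᵐ ξ ∂Pxi n, ∀ i, sortedVec ξ i ∈ Set.Icc (0 : ℝ) 1 := by
  have h : ∀ᵐ ξ ∂Pxi n, ∀ j, ξ j ∈ Set.Icc (0 : ℝ) 1 := ae_all_iff.2 fun j =>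
    (measurePreserving_eval (fun _ => unif01) j).quasiMeasurePreserving.ae
      (ae_restrict_mem measurableSet_Icc)
  filter_upwards [h] with ξ hξ i using hξ _

section OrderStatistics

variable {n : ℕ}

lemma Pxi_add_lt_sortedVec_le (i : Fin n) {ε : ℝ} (hε : 0 ≤ ε) :
    Pxi n {ξ | ((i : ℕ) + 1 : ℝ) / n + ε < sortedVec ξ i} ≤
      ENNReal.ofReal (exp (-2 * n * ε ^ 2)) := by
  have hn : (0 : ℝ) < n := Nat.cast_pos.2 i.pos
  set s : ℝ := ((i : ℕ) + 1 : ℝ) / n + ε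
  by_cases hs : s < 1
  swap
  · refine (measure_eq_zero_iff_ae_notMem.2 ?_).trans_le zero_le
    filter_upwards [ae_sortedVec_mem_Icc n] with ξ hξ
    exact fun h => ((not_lt.1 hs).trans_lt (h.trans_le (hξ i).2)).false
  have hns : n * unif01.real (Set.Iic s) = (i : ℕ) + 1 + n * ε := by
    rw [unif01_real_Iic (by positivity) hs.le]
    simp only [s]
    field_simp
  have hsub : {ξ : Fin n → ℝ | s < sortedVec ξ i} ⊆
      {ξ | (#{j | ξ j ≤ s} : ℝ) + n * ε ≤ Fintype.card (Fin n) * unif01.real (Set.Iic s)} := by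
    intro ξ hξ
    have hcard : #{j | ξ j ≤ s} ≤ (i : ℕ) :=
      not_lt.1 fun h => not_le.2 hξ ((sortedVec_le_iff ξ i s).2 h)
    simp only [Set.mem_ofPred_eq, Fintype.card_fin, hns]
    have : (#{j | ξ j ≤ s} : ℝ) ≤ (i : ℕ) := by exact_mod_cast hcard
    linarith
  rw [← ofReal_measureReal]
  refine ENNReal.ofReal_le_ofReal ((measureReal_mono hsub).trans
    ((measureReal_pi_card_add_le_mean_le unif01 s (by positivity)).trans_eq ?_))
  rw [Fintype.card_fin]
  field_simp

lemma Pxi_sortedVec_lt_sub_le (i : Fin n) {ε : ℝ} (hε : 0 ≤ ε) :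
    Pxi n {ξ | sortedVec ξ i < ((i : ℕ) + 1 : ℝ) / n - ε} ≤
      ENNReal.ofReal (exp (-2 * n * ε ^ 2)) := by
  have hn : (0 : ℝ) < n := Nat.cast_pos.2 i.pos
  set s : ℝ := ((i : ℕ) + 1 : ℝ) / n - ε
  by_cases hs : 0 ≤ s
  swap
  · refine (measure_eq_zero_iff_ae_notMem.2 ?_).trans_le zero_le
    filter_upwards [ae_sortedVec_mem_Icc n] with ξ hξ
    exact fun h => ((hξ i).1.trans_lt (h.trans (not_le.1 hs))).false
  have hs1 : s ≤ 1 := by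
    have : ((i : ℕ) + 1 : ℝ) ≤ n := by exact_mod_cast i.isLt
    have : ((i : ℕ) + 1 : ℝ) / n ≤ 1 := (div_le_one hn).2 this
    linarith
  have hns : n * unif01.real (Set.Iic s) = (i : ℕ) + 1 - n * ε := by
    rw [unif01_real_Iic hs hs1]
    simp only [s]
    field_simp
  have hsub : {ξ : Fin n → ℝ | sortedVec ξ i < s} ⊆
      {ξ | Fintype.card (Fin n) * unif01.real (Set.Iic s) + n * ε ≤ #{j | ξ j ≤ s}} := by
    intro ξ hξ
    have hcard : (i : ℕ) + 1 ≤ #{j | ξ j ≤ s} := (sortedVec_le_iff ξ i s).1 hξ.le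
    simp only [Set.mem_ofPred_eq, Fintype.card_fin, hns]
    have : ((i : ℕ) + 1 : ℝ) ≤ #{j | ξ j ≤ s} := by exact_mod_cast hcard
    linarith
  rw [← ofReal_measureReal]
  refine ENNReal.ofReal_le_ofReal ((measureReal_mono hsub).trans
    ((measureReal_pi_mean_add_le_card_le unif01 s (by positivity)).trans_eq ?_))
  rw [Fintype.card_fin]
  field_simp

end OrderStatistics

lemma Pxi_exists_lt_abs_sortedVec_sub_le (n : ℕ) {ε : ℝ} (hε : 0 ≤ ε) :
    Pxi n {ξ | ∃ i : Fin n, ε < |sortedVec ξ i - ((i : ℕ) + 1 : ℝ) / n|} ≤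
      ENNReal.ofReal (2 * n * exp (-2 * n * ε ^ 2)) := by
  set e := exp (-2 * n * ε ^ 2)
  have he : 0 ≤ e := (exp_pos _).le
  have hsub : {ξ | ∃ i : Fin n, ε < |sortedVec ξ i - ((i : ℕ) + 1 : ℝ) / n|} ⊆
      ⋃ i : Fin n, ({ξ | ((i : ℕ) + 1 : ℝ) / n + ε < sortedVec ξ i} ∪
        {ξ | sortedVec ξ i < ((i : ℕ) + 1 : ℝ) / n - ε}) := by
    rintro ξ ⟨i, hi⟩
    refine Set.mem_iUnion.2 ⟨i, ?_⟩
    rcases lt_abs.1 hi with h | h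
    · exact Or.inl (by simp only [Set.mem_ofPred_eq]; linarith)
    · exact Or.inr (by simp only [Set.mem_ofPred_eq]; linarith)
  calc _ ≤ ∑ i : Fin n, (Pxi n {ξ | ((i : ℕ) + 1 : ℝ) / n + ε < sortedVec ξ i} +
          Pxi n {ξ | sortedVec ξ i < ((i : ℕ) + 1 : ℝ) / n - ε}) :=
        (measure_mono hsub).trans ((measure_iUnion_fintype_le _ _).trans
          (sum_le_sum fun i _ => measure_union_le _ _))
    _ ≤ ∑ _i : Fin n, (ENNReal.ofReal e + ENNReal.ofReal e) := by
        gcongr with i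
        · exact Pxi_add_lt_sortedVec_le i hε
        · exact Pxi_sortedVec_lt_sub_le i hε
    _ = ENNReal.ofReal (2 * n * e) := by
        rw [sum_const, card_univ, Fintype.card_fin, nsmul_eq_mul, ← ENNReal.ofReal_add he he,
          ← ENNReal.ofReal_natCast, ← ENNReal.ofReal_mul n.cast_nonneg]
        congr 1
        ring

lemma ofReal_one_sub_le_of_measure_compl_le {α : Type*} [MeasurableSpace α] {μ : Measure α}
    [IsProbabilityMeasure μ] {s : Set α} {r : ℝ} (hr : 0 ≤ r) (h : μ sᶜ ≤ ENNReal.ofReal r) :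
    ENNReal.ofReal (1 - r) ≤ μ s := by
  rw [ENNReal.ofReal_sub _ hr, ENNReal.ofReal_one, tsub_le_iff_right]
  calc 1 = μ Set.univ := measure_univ.symm
    _ ≤ μ s + μ sᶜ := measure_univ_le_add_compl s
    _ ≤ μ s + ENNReal.ofReal r := add_le_add_right h _

theorem stmt12_general (n : ℕ) (hn : 1 ≤ n) (δ : ℝ) (hδ : δ ∈ Set.Ioc (0:ℝ) 1) :
    ENNReal.ofReal (1 - δ / 2) ≤
      Pxi n {ξv | ∀ i : Fin n,
        |sortedVec ξv i - ((i : ℕ) + 1 : ℝ) / n| ≤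
          2 * Real.sqrt (Real.log (4 * n / δ) / n)} := by
  obtain ⟨hδ0, hδ1⟩ := hδ
  have hn1 : (1 : ℝ) ≤ n := by exact_mod_cast hn
  have hn0 : (0 : ℝ) < n := by linarith
  set L := log (4 * n / δ)
  have hL : 0 ≤ L := log_nonneg ((one_le_div hδ0).2 (by linarith))
  have hnL : (n : ℝ) * sqrt (L / n) ^ 2 = L := by
    rw [sq_sqrt (by positivity)]
    field_simp
  have htail : 2 * n * exp (-2 * n * (2 * sqrt (L / n)) ^ 2) ≤ δ / 2 := by
    have h : exp (-2 * n * (2 * sqrt (L / n)) ^ 2) ≤ exp (-L) := exp_le_exp.2 (by nlinarith)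
    rw [exp_neg, exp_log (by positivity), inv_div] at h
    calc _ ≤ 2 * n * (δ / (4 * n)) := by gcongr
      _ = δ / 2 := by field_simp; ring
  refine ofReal_one_sub_le_of_measure_compl_le (by positivity) ?_
  refine (measure_mono fun ξ hξ => ?_).trans
    ((Pxi_exists_lt_abs_sortedVec_sub_le n (by positivity)).trans (ENNReal.ofReal_le_ofReal htail))
  simpa only [Set.mem_compl_iff, Set.mem_ofPred_eq, not_forall, not_le] using hξ

/-- uniform concentration of the order statistics of `n` i.i.d. uniforms:
with probability at least `1 − δ/2`, `max_i |ξ₍ᵢ₎ − i/n| ≤ 2√(log(4n/δ)/n)`. -/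
theorem stmt12 (n : ℕ) (hn : 1 ≤ n) (δ : ℝ) (hδ : δ ∈ Set.Ioc (0:ℝ) 1)
    (hlog : Real.log (4 * n / δ) ≤ n / 4) :
    ENNReal.ofReal (1 - δ / 2) ≤
      Pxi n {ξv | ∀ i : Fin n,
        |sortedVec ξv i - ((i : ℕ) + 1 : ℝ) / n| ≤
          2 * Real.sqrt (Real.log (4 * n / δ) / n)} :=
  stmt12_general n hn δ hδ
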